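/- arXiv:1210.1474 — 2 statements merged into one kernel-verified Lean document; each statement's English description precedes it below -/
import Mathlib

section
/- Let D be an integral domain with fraction field K such that the intersection of all maximal ideals of D of finite index is (0). Let g ∈ D[x], d ∈ D \ {0}, and f = g/d. Then f ∈ Int_D(M_n(D)) if and only if g is divisible modulo dD[x] by every monic irreducible polynomial in D[x] of degree n. -/
/-!
Since `f(C) = d⁻¹ • g(C)`, the condition on `f` says that `d` divides every entry of `g(C)` for
every `C`. Taking for `C` the matrix of multiplication by the root of a monic `h` on
`D[x]/(h)` in the basis `1, x, …, x^(n-1)`, the first column of `g(C)` is the coefficient vector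
of `g mod h`, so `d ∣ g mod h`. Conversely, given `C`, choose a maximal ideal `P` of finite index
with `d ∉ P` and a monic irreducible `π` of degree `n` over the finite field `D/P`. Adding to the
characteristic polynomial of `C` a suitable multiple of `d` gives a monic `h` of degree `n` lifting
`π`, hence irreducible, with `h(C) ≡ 0 (mod d)` by Cayley–Hamilton; so `g = q h + d r` gives
`g(C) ≡ 0 (mod d)`.
-/

open Polynomial

theorem Matrix.aeval_map_algebraMap_map {R A m : Type*} [CommRing R] [CommRing A] [Algebra R A]
    [Fintype m] [DecidableEq m] (C : Matrix m m R) (p : R[X]) :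
    aeval (C.map (algebraMap R A)) (p.map (algebraMap R A)) = (aeval C p).map (algebraMap R A) := by
  rw [aeval_map_algebraMap]
  exact aeval_algHom_apply (Algebra.ofId R A).mapMatrix C p

theorem Matrix.exists_inv_smul_map_eq_map_iff {R K m n : Type*} [CommRing R] [Field K]
    [Algebra R K] (hinj : Function.Injective (algebraMap R K)) {d : R} (hd : d ≠ 0)
    (A : Matrix m n R) :
    (∃ B : Matrix m n R,
        (algebraMap R K d)⁻¹ • A.map (algebraMap R K) = B.map (algebraMap R K)) ↔
      ∃ B, A = d • B := by
  have hd' : algebraMap R K d ≠ 0 := (map_ne_zero_iff _ hinj).mpr hd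
  have map_smul (B : Matrix m n R) :
      (d • B).map (algebraMap R K) = algebraMap R K d • B.map (algebraMap R K) := by
    ext
    simp
  refine exists_congr fun B => ?_
  rw [inv_smul_eq_iff₀ hd', ← map_smul, (Matrix.map_injective hinj).eq_iff]

theorem Ideal.exists_isMaximal_finite_quotient_notMem {R : Type*} [CommRing R]
    (hrad : (⨅ P ∈ {P : Ideal R | P.IsMaximal ∧ Finite (R ⧸ P)}, P) = ⊥) {d : R}
    (hd : d ≠ 0) : ∃ P : Ideal R, P.IsMaximal ∧ Finite (R ⧸ P) ∧ d ∉ P := by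
  by_contra! H
  refine hd ((Submodule.mem_bot R).mp (hrad ▸ ?_))
  simp only [Submodule.mem_iInf]
  exact fun P hP => H P hP.1 hP.2

theorem FiniteField.exists_monic_irreducible_natDegree_eq (k : Type*) [Field k] [Finite k]
    {n : ℕ} (hn : n ≠ 0) : ∃ π : k[X], π.Monic ∧ Irreducible π ∧ π.natDegree = n := by
  obtain ⟨p, _⟩ := CharP.exists k
  have : Fact p.Prime := ⟨CharP.char_is_prime k p⟩
  have : NeZero n := ⟨hn⟩
  obtain ⟨α, hα⟩ := Field.exists_primitive_element_of_finite_top k (Extension k p n)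
  have hint : IsIntegral k α := .of_finite k α
  refine ⟨minpoly k α, minpoly.monic hint, minpoly.irreducible hint, ?_⟩
  rw [(Field.primitive_element_iff_minpoly_natDegree_eq k α).mp hα, finrank_extension]

namespace AdjoinRoot

variable {R : Type*} [CommRing R] {h : R[X]} (hh : h.Monic)

theorem aeval_leftMulMatrix_root (p : R[X]) :
    aeval (Algebra.leftMulMatrix (powerBasisAux' hh) (root h)) p
      = Algebra.leftMulMatrix (powerBasisAux' hh) (mk h p) := by
  rw [aeval_algHom_apply, aeval_eq]

theorem powerBasisAux'_zero (hpos : 0 < h.natDegree) : powerBasisAux' hh ⟨0, hpos⟩ = 1 :=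
  ((powerBasis' hh).basis_eq_pow ⟨0, hpos⟩).trans (pow_zero _)

theorem leftMulMatrix_mk_apply_zero (hpos : 0 < h.natDegree) (p : R[X]) (i : Fin h.natDegree) :
    Algebra.leftMulMatrix (powerBasisAux' hh) (mk h p) i ⟨0, hpos⟩ = (p %ₘ h).coeff i := by
  rw [Algebra.leftMulMatrix_eq_repr_mul, powerBasisAux'_zero, mul_one,
    powerBasisAux'_repr_apply_to_fun, modByMonicHom_mk]

end AdjoinRoot

namespace Polynomial

theorem degree_C_mul_le {R : Type*} [Semiring R] (a : R) (p : R[X]) :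
    (C a * p).degree ≤ p.degree := by
  rw [← smul_eq_C_mul]
  exact degree_smul_le a p

theorem exists_eq_mul_add_C_mul_of_aeval_leftMulMatrix {R : Type*} [CommRing R] {h g : R[X]}
    (hh : h.Monic) (hpos : 0 < h.natDegree) {d : R}
    {B : Matrix (Fin h.natDegree) (Fin h.natDegree) R}
    (hB : aeval (Algebra.leftMulMatrix (AdjoinRoot.powerBasisAux' hh) (AdjoinRoot.root h)) g
      = d • B) :
    ∃ q r : R[X], g = q * h + C d * r := by
  have hdvd : C d ∣ g %ₘ h := by
    rw [C_dvd_iff_dvd_coeff]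
    intro i
    rcases lt_or_ge i h.natDegree with hi | hi
    · refine ⟨B ⟨i, hi⟩ ⟨0, hpos⟩, ?_⟩
      rw [← AdjoinRoot.leftMulMatrix_mk_apply_zero hh hpos g ⟨i, hi⟩,
        ← AdjoinRoot.aeval_leftMulMatrix_root, hB, Matrix.smul_apply, smul_eq_mul]
    · have hh1 : h ≠ 1 := by rintro rfl; simp at hpos
      rw [coeff_eq_zero_of_natDegree_lt ((natDegree_modByMonic_lt g hh hh1).trans_le hi)]
      exact dvd_zero d
  obtain ⟨r, hr⟩ := hdvd
  refine ⟨g /ₘ h, r, ?_⟩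
  rw [← hr, mul_comm, add_comm, modByMonic_add_div]

theorem Monic.exists_degree_lt_map_add_C_mul_eq {R S : Type*} [CommRing R] [CommRing S]
    [Nontrivial S] {φ : R →+* S} (hφ : Function.Surjective φ) {d : R} (hd : IsUnit (φ d))
    {p : R[X]} (hp : p.Monic) {π : S[X]} (hπ : π.Monic) (hdeg : π.natDegree = p.natDegree) :
    ∃ w : R[X], w.degree < p.degree ∧ (p + C d * w).map φ = π := by
  have := hφ.nontrivial
  obtain ⟨p', hp'map, hp'deg, hp'⟩ :=
    lifts_and_degree_eq_and_monic (mem_lifts_of_surjective hφ π) hπ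
  obtain ⟨u', hu'⟩ := hd.exists_right_inv
  obtain ⟨u, rfl⟩ := hφ u'
  have hdeg' : p'.degree = p.degree := by
    rw [hp'deg, degree_eq_natDegree hπ.ne_zero, degree_eq_natDegree hp.ne_zero, hdeg]
  refine ⟨C u * (p' - p), ?_, ?_⟩
  · calc (C u * (p' - p)).degree ≤ (p' - p).degree := degree_C_mul_le u _
      _ < p'.degree :=
          degree_sub_lt_left hdeg' hp'.ne_zero (by rw [hp'.leadingCoeff, hp.leadingCoeff])
      _ = p.degree := hdeg'
  · rw [← mul_assoc, ← C_mul, Polynomial.map_add, Polynomial.map_mul, Polynomial.map_sub,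
      map_C, map_mul, hu', C_1, one_mul, hp'map, add_sub_cancel]

theorem Monic.exists_irreducible_add_C_mul {R : Type*} [CommRing R] [IsDomain R]
    (P : Ideal R) [P.IsMaximal] [Finite (R ⧸ P)] {d : R} (hd : d ∉ P) {p : R[X]}
    (hp : p.Monic) (hpos : 0 < p.natDegree) :
    ∃ w : R[X], (p + C d * w).Monic ∧ (p + C d * w).natDegree = p.natDegree ∧
      Irreducible (p + C d * w) := by
  let := Ideal.Quotient.field P
  obtain ⟨π, hπ, hπirr, hπdeg⟩ :=
    FiniteField.exists_monic_irreducible_natDegree_eq (R ⧸ P) hpos.ne'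
  have hdP : IsUnit (Ideal.Quotient.mk P d) :=
    isUnit_iff_ne_zero.mpr (Ideal.Quotient.eq_zero_iff_mem.not.mpr hd)
  obtain ⟨w, hwdeg, hwmap⟩ :=
    hp.exists_degree_lt_map_add_C_mul_eq Ideal.Quotient.mk_surjective hdP hπ hπdeg
  have hlt : (C d * w).degree < p.degree := (degree_C_mul_le d w).trans_lt hwdeg
  have hmon : (p + C d * w).Monic := hp.add_of_left hlt
  exact ⟨w, hmon, natDegree_add_eq_left_of_degree_lt hlt,
    hmon.irreducible_of_irreducible_map (Ideal.Quotient.mk P) _ (hwmap ▸ hπirr)⟩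

end Polynomial

theorem Matrix.exists_monic_irreducible_aeval_eq_smul {R m : Type*} [CommRing R] [IsDomain R]
    [Fintype m] [DecidableEq m] [Nonempty m] (P : Ideal R) [P.IsMaximal] [Finite (R ⧸ P)]
    {d : R} (hd : d ∉ P) (A : Matrix m m R) :
    ∃ h : R[X], h.Monic ∧ h.natDegree = Fintype.card m ∧ Irreducible h ∧
      ∃ W : Matrix m m R, aeval A h = d • W := by
  have hdeg : A.charpoly.natDegree = Fintype.card m := A.charpoly_natDegree_eq_dim
  obtain ⟨w, hmon, hwdeg, hirr⟩ :=
    A.charpoly_monic.exists_irreducible_add_C_mul P hd (hdeg ▸ Fintype.card_pos)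
  refine ⟨_, hmon, hwdeg.trans hdeg, hirr, aeval A w, ?_⟩
  rw [map_add, aeval_self_charpoly, zero_add, map_mul, aeval_C, Algebra.smul_def]

/-- Proposition: if the intersection of maximal ideals of finite index of `D` is `(0)`,
then `f = g/d ∈ Int_D(Mₙ(D))` iff `g` is divisible modulo `dD[x]` by every monic
irreducible polynomial in `D[x]` of degree `n`. -/
theorem stmt_2 {D K : Type*} [CommRing D] [IsDomain D] [Field K] [Algebra D K]
    [IsFractionRing D K]
    (hrad : (⨅ P ∈ {P : Ideal D | P.IsMaximal ∧ Finite (D ⧸ P)}, P) = ⊥)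
    (n : ℕ) (hn : 0 < n) (g : D[X]) (d : D) (hd : d ≠ 0)
    (f : K[X]) (hf : f = Polynomial.C ((algebraMap D K d)⁻¹) * g.map (algebraMap D K)) :
    (∀ C : Matrix (Fin n) (Fin n) D, ∃ B : Matrix (Fin n) (Fin n) D,
        Polynomial.aeval (C.map (algebraMap D K)) f = B.map (algebraMap D K)) ↔
      (∀ h : D[X], h.Monic → h.natDegree = n → Irreducible h →
        ∃ q r : D[X], g = q * h + Polynomial.C d * r) := by
  have aeval_f (C : Matrix (Fin n) (Fin n) D) : aeval (C.map (algebraMap D K)) f =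
      (algebraMap D K d)⁻¹ • (aeval C g).map (algebraMap D K) := by
    rw [hf, map_mul, aeval_C, Matrix.aeval_map_algebraMap_map, Algebra.smul_def]
  simp only [aeval_f, Matrix.exists_inv_smul_map_eq_map_iff (IsFractionRing.injective D K) hd]
  constructor
  · rintro H h hh rfl -
    obtain ⟨B, hB⟩ :=
      H (Algebra.leftMulMatrix (AdjoinRoot.powerBasisAux' hh) (AdjoinRoot.root h))
    exact exists_eq_mul_add_C_mul_of_aeval_leftMulMatrix hh hn hB
  · intro H C
    obtain ⟨P, _, _, hdP⟩ := Ideal.exists_isMaximal_finite_quotient_notMem hrad hd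
    have : Nonempty (Fin n) := ⟨⟨0, hn⟩⟩
    obtain ⟨h, hh, hdeg, hirr, W, hW⟩ := C.exists_monic_irreducible_aeval_eq_smul P hdP
    obtain ⟨q, r, rfl⟩ := H h hh (hdeg.trans (Fintype.card_fin n)) hirr
    refine ⟨aeval C q * W + aeval C r, ?_⟩
    rw [map_add, map_mul, map_mul, hW, aeval_C, ← Algebra.smul_def, mul_smul_comm, smul_add]
end

section
/- Let D be an integral domain with fraction field K, C ∈ M_n(D), and f = g/d ∈ Int_D(M_n(D)) with g ∈ D[x], d ∈ D \ {0}. Then there exists r ∈ D[x] with deg r < n such that f(C) = r(C). -/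
/-!
Let `p` be the characteristic polynomial of `C` and `s = g mod p`, so that `g(C) = s(C)` by
Cayley–Hamilton and `deg s < n`. Evaluate `f` at the companion matrix `A` of `p`, i.e. the matrix
of multiplication by the root on `D[x]/(p)` in the basis `1, x, …, x^(n-1)`. As `p(A) = 0`,
`g(A) = s(A)` as well, and the first column of `s(A)` is the coefficient vector of `s`. Since
`f(A) = d⁻¹ s(A)` is integral, `d` divides every coefficient of `s`, so `s = d r` and
`f(C) = d⁻¹ s(C) = r(C)`.
-/

open Polynomial
open scoped Matrix

namespace AdjoinRoot

variable {R : Type*} [CommRing R] {p : R[X]} {n : ℕ}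

noncomputable def finBasis (hp : p.Monic) (hpn : p.natDegree = n) :
    Module.Basis (Fin n) R (AdjoinRoot p) :=
  (powerBasisAux' hp).reindex (finCongr hpn)

theorem finBasis_repr_mk [Nontrivial R] (hp : p.Monic) (hpn : p.natDegree = n) {q : R[X]}
    (hq : q.degree < n) (i : Fin n) : (finBasis hp hpn).repr (mk p q) i = q.coeff i := by
  rw [finBasis, Module.Basis.repr_reindex_apply, powerBasisAux'_repr_apply_to_fun,
    modByMonicHom_mk,
    (modByMonic_eq_self_iff (p := q) hp).2 (by rwa [degree_eq_natDegree hp.ne_zero, hpn])]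
  rfl

noncomputable def companionMatrix (hp : p.Monic) (hpn : p.natDegree = n) :
    Matrix (Fin n) (Fin n) R :=
  Algebra.leftMulMatrix (finBasis hp hpn) (root p)

theorem aeval_companionMatrix (hp : p.Monic) (hpn : p.natDegree = n) (q : R[X]) :
    aeval (companionMatrix hp hpn) q = Algebra.leftMulMatrix (finBasis hp hpn) (mk p q) := by
  rw [companionMatrix, aeval_algHom_apply, aeval_eq]

theorem aeval_companionMatrix_self (hp : p.Monic) (hpn : p.natDegree = n) :
    aeval (companionMatrix hp hpn) p = 0 := by
  rw [aeval_companionMatrix, mk_self, map_zero]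

theorem aeval_companionMatrix_mulVec [Nontrivial R] (hp : p.Monic) (hpn : p.natDegree = n)
    {q : R[X]} (hq : q.degree < n) :
    aeval (companionMatrix hp hpn) q *ᵥ (finBasis hp hpn).repr 1 =
      fun i : Fin n => q.coeff i := by
  funext i
  rw [aeval_companionMatrix, Algebra.leftMulMatrix_mulVec_repr, mul_one,
    finBasis_repr_mk hp hpn hq]

theorem C_dvd_of_aeval_companionMatrix_eq_smul [Nontrivial R] (hp : p.Monic)
    (hpn : p.natDegree = n) {q : R[X]} (hq : q.degree < n) {d : R} {B : Matrix (Fin n) (Fin n) R}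
    (hB : aeval (companionMatrix hp hpn) q = d • B) : Polynomial.C d ∣ q := by
  rw [C_dvd_iff_dvd_coeff]
  intro k
  by_cases hk : k < n
  · have hcoeff := congrFun (aeval_companionMatrix_mulVec hp hpn hq) (⟨k, hk⟩ : Fin n)
    rw [hB, Matrix.smul_mulVec] at hcoeff
    exact ⟨_, hcoeff.symm⟩
  · rw [coeff_eq_zero_of_degree_lt (hq.trans_le (by exact_mod_cast not_lt.1 hk))]
    exact dvd_zero d

end AdjoinRoot

section MatrixMap

variable {D K : Type*} [CommRing D] [Field K] [Algebra D K]

theorem Matrix.aeval_map_algebraMap {ι : Type*} [Fintype ι] [DecidableEq ι] (M : Matrix ι ι D)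
    (q : D[X]) :
    aeval (M.map (algebraMap D K)) (q.map (algebraMap D K)) = (aeval M q).map (algebraMap D K) := by
  rw [Polynomial.aeval_map_algebraMap]
  exact aeval_algHom_apply (AlgHom.mapMatrix (Algebra.ofId D K)) M q

theorem Matrix.aeval_map_C_inv_mul {ι : Type*} [Fintype ι] [DecidableEq ι] (M : Matrix ι ι D)
    (d : D) (g : D[X]) :
    aeval (M.map (algebraMap D K)) (Polynomial.C (algebraMap D K d)⁻¹ * g.map (algebraMap D K))
      = (algebraMap D K d)⁻¹ • (aeval M g).map (algebraMap D K) := by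
  rw [map_mul, aeval_C, Matrix.aeval_map_algebraMap, ← Algebra.smul_def]

theorem Matrix.eq_smul_of_inv_smul_map_eq {m n : Type*}
    (hφ : Function.Injective (algebraMap D K)) {d : D} (hd : d ≠ 0) {M B : Matrix m n D}
    (h : (algebraMap D K d)⁻¹ • M.map (algebraMap D K) = B.map (algebraMap D K)) :
    M = d • B := by
  apply Matrix.map_injective hφ
  change M.map _ = (d • B).map _
  rw [Matrix.map_smulₛₗ _ (algebraMap D K) d (map_mul (algebraMap D K) d), ← h,
    smul_inv_smul₀ ((map_ne_zero_iff _ hφ).2 hd)]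

end MatrixMap

/-- For `f = g/d ∈ Int_D(Mₙ(D))` and `C ∈ Mₙ(D)` there is `r ∈ D[x]` with
`deg r < n` and `f(C) = r(C)`. -/
theorem stmt_7 {D K : Type*} [CommRing D] [IsDomain D] [Field K] [Algebra D K]
    [IsFractionRing D K] (n : ℕ) (C : Matrix (Fin n) (Fin n) D)
    (g : D[X]) (d : D) (hd : d ≠ 0)
    (f : K[X]) (hf : f = Polynomial.C ((algebraMap D K d)⁻¹) * g.map (algebraMap D K))
    (hint : ∀ A : Matrix (Fin n) (Fin n) D, ∃ B : Matrix (Fin n) (Fin n) D,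
        Polynomial.aeval (A.map (algebraMap D K)) f = B.map (algebraMap D K)) :
    ∃ r : D[X], r.degree < n ∧
      Polynomial.aeval (C.map (algebraMap D K)) f
        = (Polynomial.aeval C r).map (algebraMap D K) := by
  have hφ : Function.Injective (algebraMap D K) := IsFractionRing.injective D K
  have hp : C.charpoly.Monic := C.charpoly_monic
  have hpn : C.charpoly.natDegree = n := by
    rw [Matrix.charpoly_natDegree_eq_dim, Fintype.card_fin]
  have hs : (g %ₘ C.charpoly).degree < n := by
    simpa [degree_eq_natDegree hp.ne_zero, hpn] using degree_modByMonic_lt g hp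
  set A := AdjoinRoot.companionMatrix hp hpn
  obtain ⟨B, hB⟩ := hint A
  have hsA : aeval A (g %ₘ C.charpoly) = d • B := by
    rw [aeval_modByMonic_eq_self_of_root (AdjoinRoot.aeval_companionMatrix_self hp hpn)]
    rw [hf, Matrix.aeval_map_C_inv_mul] at hB
    exact Matrix.eq_smul_of_inv_smul_map_eq hφ hd hB
  obtain ⟨r, hr⟩ := AdjoinRoot.C_dvd_of_aeval_companionMatrix_eq_smul hp hpn hs hsA
  refine ⟨r, by rwa [hr, degree_C_mul hd] at hs, ?_⟩
  rw [hf, Matrix.aeval_map_C_inv_mul, ← aeval_modByMonic_eq_self_of_root C.aeval_self_charpoly,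
    hr, map_mul, aeval_C, ← Algebra.smul_def, Matrix.map_smul' _ _ _ (map_mul _),
    inv_smul_smul₀ ((map_ne_zero_iff _ hφ).2 hd)]
end
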